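/- arXiv:2412.19916 — 4 statements merged into one kernel-verified Lean document; each statement's English description precedes it below -/
import Mathlib

section
/- Suppose f : ℝ^d → ℝ is L-smooth, and at a point x the clipped stochastic gradient estimator g with threshold τ(x) (the p-th quantile of ‖∇f_ξ(x)‖) satisfies ‖g‖ ≤ τ(x) almost surely, ‖E[g] - ᾱ(x)∇f(x)‖ ≤ σ(1-p)^{1-1/q}, and τ(x) ≤ ‖∇f(x)‖ + σ(1-p)^{-1/q}. Then for any β > 0 and step size γ > 0, the point x⁺ = x - γ g satisfies E[f(x⁺)] ≤ f(x) - γ(ᾱ(x) - β/2 - γL)‖∇f(x)‖² + (γ/2)β^{-1}(1-p)^{2-2/q}σ² + γ²Lσ²(1-p)^{-2/q}. -/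
open MeasureTheory

set_option maxHeartbeats 1000000 in
/-- One-step descent recursion for QC-SGD. -/
theorem qcsgd_descent_recursion {Ω : Type*} [MeasurableSpace Ω]
    (μ : Measure Ω) [IsProbabilityMeasure μ]
    {d : ℕ} (f : EuclideanSpace ℝ (Fin d) → ℝ)
    (G : EuclideanSpace ℝ (Fin d) → EuclideanSpace ℝ (Fin d)) -- gradient of f
    (L q σ p β γ τ : ℝ)
    (hL : 0 < L)
    (hsmooth : ∀ x u, f (x + u) ≤ f x + inner ℝ (G x) u + L / 2 * ‖u‖ ^ 2)
    (hq : 1 < q) (hq2 : q ≤ 2) (hσ : 0 < σ) (hp0 : 0 < p) (hp1 : p < 1)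
    (hβ : 0 < β) (hγ : 0 < γ) (hτ : 0 ≤ τ)
    (x : EuclideanSpace ℝ (Fin d))
    (g : Ω → EuclideanSpace ℝ (Fin d)) -- clipped stochastic gradient at x
    (ᾱ : ℝ)
    (hclip : ∀ᵐ ω ∂μ, ‖g ω‖ ≤ τ)
    (hgint : Integrable g μ)
    (hfint : Integrable (fun ω => f (x - γ • g ω)) μ)
    (hbias : ‖(∫ ω, g ω ∂μ) - ᾱ • G x‖ ≤ σ * (1 - p) ^ (1 - 1 / q))
    (hτbound : τ ≤ ‖G x‖ + σ * (1 - p) ^ (-(1 / q))) :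
    (∫ ω, f (x - γ • g ω) ∂μ)
      ≤ f x - γ * (ᾱ - β / 2 - γ * L) * ‖G x‖ ^ 2
        + γ / 2 * β⁻¹ * (1 - p) ^ (2 - 2 / q) * σ ^ 2
        + γ ^ 2 * L * σ ^ 2 * (1 - p) ^ (-(2 / q)) := by
  have h1p : (0:ℝ) < 1 - p := by linarith
  set S1 : ℝ := (1 - p) ^ (1 - 1 / q) with hS1
  set S2 : ℝ := (1 - p) ^ (-(1 / q)) with hS2
  have hS1pos : 0 < S1 := Real.rpow_pos_of_pos h1p _
  have hS2pos : 0 < S2 := Real.rpow_pos_of_pos h1p _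
  have hS1sq : S1 * S1 = (1 - p) ^ (2 - 2 / q) := by
    rw [hS1, ← Real.rpow_add h1p]; ring_nf
  have hS2sq : S2 * S2 = (1 - p) ^ (-(2 / q)) := by
    rw [hS2, ← Real.rpow_add h1p]; ring_nf
  set N : ℝ := ‖G x‖ with hN
  have hNnn : 0 ≤ N := norm_nonneg _
  have hgm := hgint.aestronglyMeasurable
  -- integrability of ‖g‖²
  have hA : Integrable (fun ω => ‖g ω‖ ^ 2) μ := by
    refine Integrable.mono' (integrable_const (τ ^ 2)) ((hgm.norm.pow 2)) ?_
    filter_upwards [hclip] with ω hω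
    have : ‖g ω‖ ^ 2 ≤ τ ^ 2 := by
      have := norm_nonneg (g ω); nlinarith
    simpa [abs_of_nonneg (sq_nonneg ‖g ω‖)] using this
  have hInner : Integrable (fun ω => (inner ℝ (G x) (g ω) : ℝ)) μ :=
    hgint.const_inner _
  -- pointwise descent bound
  have hpt : ∀ᵐ ω ∂μ, f (x - γ • g ω)
      ≤ f x - γ * inner ℝ (G x) (g ω) + L / 2 * γ ^ 2 * ‖g ω‖ ^ 2 := by
    refine Filter.Eventually.of_forall fun ω => ?_
    have h := hsmooth x ((-γ) • g ω)
    have e1 : x + (-γ) • g ω = x - γ • g ω := by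
      rw [neg_smul]; abel
    have e2 : (inner ℝ (G x) ((-γ) • g ω) : ℝ) = -γ * inner ℝ (G x) (g ω) := by
      rw [real_inner_smul_right]
    have e3 : ‖(-γ) • g ω‖ ^ 2 = γ ^ 2 * ‖g ω‖ ^ 2 := by
      rw [norm_smul]; simp [abs_of_pos hγ]; ring
    rw [e1, e2, e3] at h
    linarith
  -- integrate
  have hI1 : Integrable (fun ω => f x - γ * inner ℝ (G x) (g ω)) μ :=
    (integrable_const (f x)).sub (hInner.const_mul γ)
  have hI2 : Integrable (fun ω => L / 2 * γ ^ 2 * ‖g ω‖ ^ 2) μ := hA.const_mul _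
  have hIγ : Integrable (fun ω => γ * inner ℝ (G x) (g ω)) μ := hInner.const_mul γ
  have hrhsInt : Integrable (fun ω => f x - γ * inner ℝ (G x) (g ω)
      + L / 2 * γ ^ 2 * ‖g ω‖ ^ 2) μ := hI1.add hI2
  have hstep : (∫ ω, f (x - γ • g ω) ∂μ)
      ≤ f x - γ * inner ℝ (G x) (∫ ω, g ω ∂μ)
        + L / 2 * γ ^ 2 * (∫ ω, ‖g ω‖ ^ 2 ∂μ) := by
    calc (∫ ω, f (x - γ • g ω) ∂μ)
        ≤ ∫ ω, (f x - γ * inner ℝ (G x) (g ω) + L / 2 * γ ^ 2 * ‖g ω‖ ^ 2) ∂μ :=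
          integral_mono_ae hfint hrhsInt hpt
      _ = f x - γ * inner ℝ (G x) (∫ ω, g ω ∂μ)
          + L / 2 * γ ^ 2 * (∫ ω, ‖g ω‖ ^ 2 ∂μ) := by
          rw [integral_add hI1 hI2,
            integral_sub (integrable_const (f x)) hIγ,
            integral_const, integral_const_mul, integral_const_mul,
            integral_inner hgint]
          simp
  -- bound on second moment
  have hAbound : (∫ ω, ‖g ω‖ ^ 2 ∂μ) ≤ (N + σ * S2) ^ 2 := by
    have hτle : τ ^ 2 ≤ (N + σ * S2) ^ 2 := by nlinarith
    have : (∫ ω, ‖g ω‖ ^ 2 ∂μ) ≤ ∫ _, τ ^ 2 ∂μ := by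
      refine integral_mono_ae hA (integrable_const _) ?_
      filter_upwards [hclip] with ω hω
      have := norm_nonneg (g ω); nlinarith
    simpa using this.trans (by simpa using hτle)
  -- bound on inner product
  have hInnerBound : ᾱ * N ^ 2 - N * (σ * S1) ≤ inner ℝ (G x) (∫ ω, g ω ∂μ) := by
    have h1 : (inner ℝ (G x) ((∫ ω, g ω ∂μ) - ᾱ • G x) : ℝ)
        ≥ -(N * (σ * S1)) := by
      have habs := abs_real_inner_le_norm (G x) ((∫ ω, g ω ∂μ) - ᾱ • G x)
      have : ‖G x‖ * ‖(∫ ω, g ω ∂μ) - ᾱ • G x‖ ≤ N * (σ * S1) := by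
        apply mul_le_mul_of_nonneg_left hbias hNnn
      have h2 := abs_le.mp (habs.trans this)
      linarith [h2.1]
    have h3 : (inner ℝ (G x) ((∫ ω, g ω ∂μ) - ᾱ • G x) : ℝ)
        = inner ℝ (G x) (∫ ω, g ω ∂μ) - ᾱ * N ^ 2 := by
      rw [inner_sub_right, real_inner_smul_right, real_inner_self_eq_norm_sq]
    linarith [h1, h3 ▸ h1]
  -- combine
  have key : (∫ ω, f (x - γ • g ω) ∂μ)
      ≤ f x - γ * (ᾱ * N ^ 2 - N * (σ * S1)) + L / 2 * γ ^ 2 * (N + σ * S2) ^ 2 := by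
    have h1 : γ * (ᾱ * N ^ 2 - N * (σ * S1)) ≤ γ * inner ℝ (G x) (∫ ω, g ω ∂μ) :=
      mul_le_mul_of_nonneg_left hInnerBound hγ.le
    have h2 : L / 2 * γ ^ 2 * (∫ ω, ‖g ω‖ ^ 2 ∂μ)
        ≤ L / 2 * γ ^ 2 * (N + σ * S2) ^ 2 := by
      apply mul_le_mul_of_nonneg_left hAbound; positivity
    linarith [hstep, h1, h2]
  have hYoung : N * (σ * S1) ≤ β / 2 * N ^ 2 + β⁻¹ / 2 * (σ * S1) ^ 2 := by
    have := sq_nonneg (β * N - σ * S1)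
    have hβi : β * β⁻¹ = 1 := mul_inv_cancel₀ (ne_of_gt hβ)
    nlinarith [sq_nonneg (β * N - σ * S1), mul_pos hβ hβ]
  have hsq2 : (N + σ * S2) ^ 2 ≤ 2 * N ^ 2 + 2 * (σ * S2) ^ 2 := by nlinarith [sq_nonneg (N - σ * S2)]
  have goal2 : f x - γ * (ᾱ * N ^ 2 - N * (σ * S1)) + L / 2 * γ ^ 2 * (N + σ * S2) ^ 2
      ≤ f x - γ * (ᾱ - β / 2 - γ * L) * N ^ 2
        + γ / 2 * β⁻¹ * (S1 * S1) * σ ^ 2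
        + γ ^ 2 * L * σ ^ 2 * (S2 * S2) := by
    have t1 : γ * (N * (σ * S1)) ≤ γ * (β / 2 * N ^ 2 + β⁻¹ / 2 * (σ * S1) ^ 2) :=
      mul_le_mul_of_nonneg_left hYoung hγ.le
    have t2 : L / 2 * γ ^ 2 * (N + σ * S2) ^ 2
        ≤ L / 2 * γ ^ 2 * (2 * N ^ 2 + 2 * (σ * S2) ^ 2) :=
      mul_le_mul_of_nonneg_left hsq2 (by positivity)
    nlinarith [t1, t2]
  rw [← hS1sq, ← hS2sq]
  calc (∫ ω, f (x - γ • g ω) ∂μ) ≤ _ := key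
    _ ≤ _ := goal2
end

section
/- Under the assumptions of the QC-SGD recursion lemma, and additionally assuming ᾱ(x^t) ≥ p for all t, if the constant step size satisfies 0 < γ ≤ (2p - β - c)/(2L) for constants c, β ∈ (0,1) with β + c ≤ 2p, then the iterates x^{t+1} = x^t - γ g^t of QC-SGD satisfy (c/T) Σ_{t=0}^{T-1} E‖∇f(x^t)‖² ≤ 2(f(x⁰) - f^inf)/(γT) + 2γLσ²h^{-2/q} + β^{-1}σ²h^{2-2/q}, where h = 1 - p. -/
/-- Convergence of QC-SGD with constant step size. Here `F t = E f(x^t)`,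
`N t = E‖∇f(x^t)‖²`, and `ᾱ t` is the expected clipping factor at iterate t. -/
theorem qcsgd_constant_step_convergence
    (F N ᾱ : ℕ → ℝ) (L q σ p β c γ finf : ℝ) (T : ℕ) (hT : 0 < T)
    (hL : 0 < L) (hq : 1 < q) (hq2 : q ≤ 2) (hσ : 0 ≤ σ)
    (hp0 : 0 < p) (hp1 : p < 1)
    (hc : c ∈ Set.Ioo (0:ℝ) 1) (hβ : β ∈ Set.Ioo (0:ℝ) 1)
    (hβc : β + c ≤ 2 * p)
    (hγ0 : 0 < γ) (hγ : γ ≤ (2 * p - β - c) / (2 * L))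
    (hN : ∀ t, 0 ≤ N t)
    (hlow : ∀ t, finf ≤ F t)
    (hᾱ : ∀ t, p ≤ ᾱ t)
    (hrec : ∀ t, F (t + 1) ≤ F t - γ * (ᾱ t - β / 2 - γ * L) * N t
        + γ / 2 * β⁻¹ * (1 - p) ^ (2 - 2 / q) * σ ^ 2
        + γ ^ 2 * L * σ ^ 2 * (1 - p) ^ (-(2 / q))) :
    c / T * ∑ t ∈ Finset.range T, N t
      ≤ 2 * (F 0 - finf) / (γ * T)
        + 2 * γ * L * σ ^ 2 * (1 - p) ^ (-(2 / q))
        + β⁻¹ * σ ^ 2 * (1 - p) ^ (2 - 2 / q) := by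
  set A : ℝ := γ / 2 * β⁻¹ * (1 - p) ^ (2 - 2 / q) * σ ^ 2
      + γ ^ 2 * L * σ ^ 2 * (1 - p) ^ (-(2 / q)) with hA
  -- γ * L ≤ (2p - β - c)/2
  have hγL : γ * L ≤ (2 * p - β - c) / 2 := by
    have h2L : (0:ℝ) < 2 * L := by linarith
    calc γ * L ≤ ((2 * p - β - c) / (2 * L)) * L := by
          exact mul_le_mul_of_nonneg_right hγ hL.le
      _ = (2 * p - β - c) / 2 := by field_simp
  -- per-step bound
  have hstep : ∀ t, F (t + 1) ≤ F t - γ * (c / 2) * N t + A := by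
    intro t
    have hcoef : c / 2 ≤ ᾱ t - β / 2 - γ * L := by
      have := hᾱ t; linarith
    have := hrec t
    have hmul : γ * (c / 2) * N t ≤ γ * (ᾱ t - β / 2 - γ * L) * N t := by
      apply mul_le_mul_of_nonneg_right _ (hN t)
      exact mul_le_mul_of_nonneg_left hcoef hγ0.le
    rw [hA]; linarith
  -- telescoping
  have hsum : ∀ n : ℕ, γ * (c / 2) * ∑ t ∈ Finset.range n, N t ≤ F 0 - F n + n * A := by
    intro n
    induction n with
    | zero => simp
    | succ n ih =>
      rw [Finset.sum_range_succ]
      have := hstep n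
      push_cast
      nlinarith [this, ih]
  have hTpos : (0:ℝ) < T := by exact_mod_cast hT
  have key : γ * (c / 2) * ∑ t ∈ Finset.range T, N t ≤ F 0 - finf + T * A := by
    have := hsum T
    have := hlow T
    linarith
  have hγT : (0:ℝ) < γ * T := mul_pos hγ0 hTpos
  -- divide by γT/2
  have h2 : c / T * ∑ t ∈ Finset.range T, N t
      ≤ 2 * (F 0 - finf) / (γ * T) + 2 / γ * A := by
    have hpos : (0:ℝ) < 2 / (γ * T) := by positivity
    have key2 := mul_le_mul_of_nonneg_left key hpos.le
    have e1 : 2 / (γ * (T:ℝ)) * (γ * (c / 2) * ∑ t ∈ Finset.range T, N t)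
        = c / (T:ℝ) * ∑ t ∈ Finset.range T, N t := by
      field_simp
    have e2 : 2 / (γ * (T:ℝ)) * (F 0 - finf + (T:ℝ) * A)
        = 2 * (F 0 - finf) / (γ * (T:ℝ)) + 2 / γ * A := by
      field_simp
    linarith
  have hAeq : 2 / γ * A = β⁻¹ * σ ^ 2 * (1 - p) ^ (2 - 2 / q)
      + 2 * γ * L * σ ^ 2 * (1 - p) ^ (-(2 / q)) := by
    rw [hA]; field_simp
  linarith [h2, hAeq.ge, hAeq.le]
end

section
/- Under the assumptions of the QC-SGD recursion lemma with time-varying step sizes γ_t satisfying 0 < γ_t ≤ (2p - β - c)/(2L), where c, β ∈ (0,1) and β + c ≤ 2p, the iterates satisfy (c/Γ_T) Σ_{t=0}^{T-1} γ_t E‖∇f(x^t)‖² ≤ 2(f(x⁰) - f^inf)/Γ_T + (σ²/Γ_T) Σ_{t=0}^{T-1} γ_t h^{-2/q}(2Lγ_t + β^{-1}h²), where Γ_T = Σ_{t=0}^{T-1} γ_t and h = 1 - p. -/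
/-- Convergence of QC-SGD with time-varying step sizes (Theorem 1, general case).
`F t = E f(x^t)`, `N t = E‖∇f(x^t)‖²`, `h = 1 - p`, `Γ_T = Σ γ_t`. -/
theorem qcsgd_general_convergence
    (F N γ : ℕ → ℝ) (L q σ p β c finf : ℝ) (T : ℕ) (hT : 0 < T)
    (hL : 0 < L) (hq : 1 < q) (hq2 : q ≤ 2) (hσ : 0 ≤ σ)
    (hp0 : 0 < p) (hp1 : p < 1)
    (hc : c ∈ Set.Ioo (0:ℝ) 1) (hβ : β ∈ Set.Ioo (0:ℝ) 1)
    (hβc : β + c ≤ 2 * p)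
    (hγ0 : ∀ t, 0 < γ t) (hγ : ∀ t, γ t ≤ (2 * p - β - c) / (2 * L))
    (hN : ∀ t, 0 ≤ N t)
    (hlow : ∀ t, finf ≤ F t)
    (hrec : ∀ t, F (t + 1) ≤ F t - γ t * (p - β / 2 - γ t * L) * N t
        + γ t / 2 * β⁻¹ * (1 - p) ^ (2 - 2 / q) * σ ^ 2
        + γ t ^ 2 * L * σ ^ 2 * (1 - p) ^ (-(2 / q))) :
    c / (∑ t ∈ Finset.range T, γ t) * ∑ t ∈ Finset.range T, γ t * N t
      ≤ 2 * (F 0 - finf) / (∑ t ∈ Finset.range T, γ t)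
        + σ ^ 2 / (∑ t ∈ Finset.range T, γ t) *
          ∑ t ∈ Finset.range T,
            γ t * (1 - p) ^ (-(2 / q)) * (2 * L * γ t + β⁻¹ * (1 - p) ^ (2:ℝ)) := by
  obtain ⟨hc0, hc1⟩ := hc
  obtain ⟨hβ0, hβ1⟩ := hβ
  have hh : (0:ℝ) < 1 - p := by linarith
  set S := ∑ t ∈ Finset.range T, γ t * N t with hS
  set Γ := ∑ t ∈ Finset.range T, γ t with hΓdef
  have hΓ : 0 < Γ := Finset.sum_pos (fun t _ => hγ0 t) (Finset.nonempty_range_iff.mpr hT.ne')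
  -- per-step key inequality
  have key : ∀ t, c / 2 * (γ t * N t) ≤ F t - F (t + 1)
      + (γ t / 2 * β⁻¹ * (1 - p) ^ (2 - 2 / q) * σ ^ 2
        + γ t ^ 2 * L * σ ^ 2 * (1 - p) ^ (-(2 / q))) := by
    intro t
    have h1 := hrec t
    have hγL : γ t * L ≤ (2 * p - β - c) / 2 := by
      have := hγ t
      have h2L : (0:ℝ) < 2 * L := by linarith
      calc γ t * L ≤ ((2 * p - β - c) / (2 * L)) * L :=
            mul_le_mul_of_nonneg_right this hL.le
        _ = (2 * p - β - c) / 2 := by field_simp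
    have hcoef : c / 2 ≤ p - β / 2 - γ t * L := by linarith
    have h2 : c / 2 * (γ t * N t) ≤ γ t * (p - β / 2 - γ t * L) * N t := by
      have := mul_le_mul_of_nonneg_right hcoef (mul_nonneg (hγ0 t).le (hN t))
      nlinarith [hN t, (hγ0 t).le]
    linarith
  -- sum
  have hsum : c / 2 * S ≤ (F 0 - F T)
      + ∑ t ∈ Finset.range T, (γ t / 2 * β⁻¹ * (1 - p) ^ (2 - 2 / q) * σ ^ 2
        + γ t ^ 2 * L * σ ^ 2 * (1 - p) ^ (-(2 / q))) := by
    have h1 : ∑ t ∈ Finset.range T, (c / 2 * (γ t * N t)) ≤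
        ∑ t ∈ Finset.range T, ((F t - F (t + 1))
          + (γ t / 2 * β⁻¹ * (1 - p) ^ (2 - 2 / q) * σ ^ 2
            + γ t ^ 2 * L * σ ^ 2 * (1 - p) ^ (-(2 / q)))) :=
      Finset.sum_le_sum fun t _ => key t
    rw [Finset.sum_add_distrib] at h1
    have htel : ∑ t ∈ Finset.range T, (F t - F (t + 1)) = F 0 - F T := by
      have := Finset.sum_range_sub' F T
      simpa using this
    rw [htel] at h1
    rw [← Finset.mul_sum] at h1
    exact h1
  -- relate the two noise sums
  have hterm : ∀ t, σ ^ 2 * (γ t * (1 - p) ^ (-(2 / q)) * (2 * L * γ t + β⁻¹ * (1 - p) ^ (2:ℝ)))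
      = 2 * (γ t / 2 * β⁻¹ * (1 - p) ^ (2 - 2 / q) * σ ^ 2
        + γ t ^ 2 * L * σ ^ 2 * (1 - p) ^ (-(2 / q))) := by
    intro t
    have hrp : (1 - p) ^ (-(2 / q)) * (1 - p) ^ (2:ℝ) = (1 - p) ^ (2 - 2 / q) := by
      rw [← Real.rpow_add hh]
      ring_nf
    rw [← hrp]; ring
  have hsum2 : σ ^ 2 * ∑ t ∈ Finset.range T,
        (γ t * (1 - p) ^ (-(2 / q)) * (2 * L * γ t + β⁻¹ * (1 - p) ^ (2:ℝ)))
      = 2 * ∑ t ∈ Finset.range T, (γ t / 2 * β⁻¹ * (1 - p) ^ (2 - 2 / q) * σ ^ 2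
        + γ t ^ 2 * L * σ ^ 2 * (1 - p) ^ (-(2 / q))) := by
    rw [Finset.mul_sum, Finset.mul_sum]
    exact Finset.sum_congr rfl fun t _ => hterm t
  set S2 := ∑ t ∈ Finset.range T,
      (γ t * (1 - p) ^ (-(2 / q)) * (2 * L * γ t + β⁻¹ * (1 - p) ^ (2:ℝ))) with hS2
  have hmain : c * S ≤ 2 * (F 0 - finf) + σ ^ 2 * S2 := by
    have := hlow T
    rw [hsum2]
    linarith
  have hfinal : c / Γ * S ≤ 2 * (F 0 - finf) / Γ + σ ^ 2 / Γ * S2 := by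
    rw [div_mul_eq_mul_div, div_mul_eq_mul_div, ← add_div]
    exact (div_le_div_iff_of_pos_right hΓ).mpr hmain
  exact hfinal
end

section
/- For the example f_ξ(x) = (1/2)(x+r)² w.p. ω and (1/2)x² w.p. 1-ω, with ω ∈ (1/2, 1), suppose quantile clipping normalizes the gradient from the first branch to have magnitude 1 while leaving the second branch unclipped, so the estimator is g(x) = 1 w.p. ω and g(x) = x w.p. 1-ω. Then the expected fixed point x† (the point with E[g(x†)] = 0) equals -ω/(1-ω), and for any r ≠ 1/(1-ω), |∇f(x†)| = |rω - ω/(1-ω)| > 0, so the fixed point of QC-SGD is not a stationary point of f. -/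
/-! The mean of the clipped estimator, ω + (1 - ω) x, is affine with nonzero slope, so its only
root is x† = -ω/(1 - ω). There the gradient x + rω factors as ω (r - 1/(1 - ω)), which vanishes
only if r = 1/(1 - ω), because ω > 1/2. -/

theorem add_mul_eq_zero_iff_eq_neg_div {K : Type*} [Field K] {a b x : K} (hb : b ≠ 0) :
    a + b * x = 0 ↔ x = -(a / b) := by
  rw [← neg_div, eq_div_iff hb, eq_neg_iff_add_eq_zero, mul_comm, add_comm]

theorem neg_div_one_sub_add_mul {K : Type*} [Field K] {ω : K} (r : K) (hω : 1 - ω ≠ 0) :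
    -(ω / (1 - ω)) + r * ω = ω * (r - 1 / (1 - ω)) := by
  field_simp
  ring

theorem example_fixed_point_bias_general (ω r : ℝ) (hω : ω ∈ Set.Ioo (1/2 : ℝ) 1)
    (Eg gradf : ℝ → ℝ)
    (hEg : ∀ x, Eg x = ω * 1 + (1 - ω) * x)       -- E[g(x)], g(x)=1 w.p. ω, x w.p. 1-ω
    (hgradf : ∀ x, gradf x = x + r * ω) :          -- ∇f(x)
    Eg (-(ω / (1 - ω))) = 0 ∧
    (∀ x, Eg x = 0 → x = -(ω / (1 - ω))) ∧
    |gradf (-(ω / (1 - ω)))| = |r * ω - ω / (1 - ω)| ∧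
    (r ≠ 1 / (1 - ω) → 0 < |gradf (-(ω / (1 - ω)))|) := by
  obtain ⟨hω_half, hω_one⟩ := hω
  have hslope : 1 - ω ≠ 0 := sub_ne_zero.2 hω_one.ne'
  have hroot (x : ℝ) : Eg x = 0 ↔ x = -(ω / (1 - ω)) := by
    rw [hEg, mul_one]
    exact add_mul_eq_zero_iff_eq_neg_div hslope
  have hgrad : gradf (-(ω / (1 - ω))) = ω * (r - 1 / (1 - ω)) := by
    rw [hgradf, neg_div_one_sub_add_mul r hslope]
  refine ⟨(hroot _).2 rfl, fun x => (hroot x).1, ?_, fun hr => ?_⟩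
  · rw [hgradf, neg_add_eq_sub]
  · rw [hgrad]
    exact abs_pos.2 (mul_ne_zero (by linarith) (sub_ne_zero.2 hr))

/-- The expected fixed point x† = -ω/(1-ω) of QC-SGD on the example satisfies
E[g(x†)] = 0, and |∇f(x†)| = |rω - ω/(1-ω)| > 0 whenever r ≠ 1/(1-ω):
the fixed point is not a stationary point of f. -/
theorem example_fixed_point_bias (ω r : ℝ) (hω : ω ∈ Set.Ioo (1/2 : ℝ) 1) (hr : 0 < r)
    (Eg gradf : ℝ → ℝ)
    (hEg : ∀ x, Eg x = ω * 1 + (1 - ω) * x)       -- E[g(x)], g(x)=1 w.p. ω, x w.p. 1-ω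
    (hgradf : ∀ x, gradf x = x + r * ω) :          -- ∇f(x)
    Eg (-(ω / (1 - ω))) = 0 ∧
    (∀ x, Eg x = 0 → x = -(ω / (1 - ω))) ∧
    |gradf (-(ω / (1 - ω)))| = |r * ω - ω / (1 - ω)| ∧
    (r ≠ 1 / (1 - ω) → 0 < |gradf (-(ω / (1 - ω)))|) :=
  example_fixed_point_bias_general ω r hω Eg gradf hEg hgradf
end
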